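/- Let F = g_1(x_0,...,x_{m_1}) + g_2(x_{m_1+1},...,x_{m_1+m_2}) be a sum of two homogeneous polynomials of the same degree d in disjoint sets of variables. If the hypersurface V(F) ⊂ ℙ^{m_1+m_2} is smooth, then both hypersurfaces V(g_1 + y^d) ⊂ ℙ^{m_1+1} and V(g_2 + z^d) ⊂ ℙ^{m_2} are smooth. -/

import Mathlib

open MvPolynomial

def IsSmoothHypersurface {σ : Type*} [Fintype σ] [DecidableEq σ]
    (F : MvPolynomial σ ℂ) : Prop :=
  ∀ v : σ → ℂ, (∀ i, eval v (pderiv i F) = 0) → v = 0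

/-! For `d ≥ 2`, a critical point `(x, y)` of `g₁ + y^d` has `y = 0`, and then `(x, 0)` is a
critical point of `g₁ + g₂`, because the partial derivatives of `g₂` have no constant term; for
`d = 1` the derivative in `y` is `1`, so there are no critical points at all. The case `d = 0`
cannot occur: then `g₁ + g₂` is constant and every point is critical. -/

namespace MvPolynomial

variable {R σ τ : Type*}

section CommSemiring

variable [CommSemiring R]

lemma pderiv_rename_eq_zero_of_notMem_range [DecidableEq τ] {f : σ → τ} {j : τ}
    (hj : j ∉ Set.range f) (p : MvPolynomial σ R) : pderiv j (rename f p) = 0 := by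
  refine pderiv_eq_zero_of_notMem_vars fun hvars => hj ?_
  obtain ⟨x, -, hx⟩ := Finset.mem_image.mp (vars_rename f p hvars)
  exact ⟨x, hx⟩

lemma IsHomogeneous.eval_zero_pderiv [DecidableEq σ] {p : MvPolynomial σ R} {d : ℕ}
    (hp : p.IsHomogeneous d) (hd : d ≠ 1) (i : σ) : eval 0 (pderiv i p) = 0 := by
  rw [eval_zero, constantCoeff_eq, coeff_pderiv, zero_add,
    hp.coeff_eq_zero (by simpa using hd.symm), zero_mul]

variable [DecidableEq σ] [DecidableEq τ]

lemma eval_sumElim_pderiv_inl_rename_add (p : MvPolynomial σ R) (q : MvPolynomial τ R)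
    (a : σ → R) (b : τ → R) (i : σ) :
    eval (Sum.elim a b) (pderiv (Sum.inl i) (rename Sum.inl p + rename Sum.inr q)) =
      eval a (pderiv i p) := by
  rw [map_add, pderiv_rename Sum.inl_injective,
    pderiv_rename_eq_zero_of_notMem_range (by simp), add_zero, eval_rename, Sum.elim_comp_inl]

lemma eval_sumElim_pderiv_inr_rename_add (p : MvPolynomial σ R) (q : MvPolynomial τ R)
    (a : σ → R) (b : τ → R) (j : τ) :
    eval (Sum.elim a b) (pderiv (Sum.inr j) (rename Sum.inl p + rename Sum.inr q)) =
      eval b (pderiv j q) := by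
  rw [map_add, pderiv_rename Sum.inr_injective,
    pderiv_rename_eq_zero_of_notMem_range (by simp), zero_add, eval_rename, Sum.elim_comp_inr]

end CommSemiring

lemma eq_zero_of_eval_pderiv_X_pow [CommRing R] [IsDomain R] [CharZero R] [DecidableEq σ]
    {d : ℕ} (hd : d ≠ 0) {v : σ → R} {i : σ} (h : eval v (pderiv i (X i ^ d)) = 0) :
    v i = 0 := by
  rw [pderiv_pow, pderiv_X_self, mul_one, map_mul, map_pow, eval_X, map_natCast,
    mul_eq_zero] at h
  exact (pow_eq_zero_iff'.mp (h.resolve_left (Nat.cast_ne_zero.mpr hd))).1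

end MvPolynomial

section IsSmoothHypersurface

variable {σ τ : Type*} [Fintype σ] [DecidableEq σ] [Fintype τ] [DecidableEq τ]

lemma not_isSmoothHypersurface_of_isHomogeneous_zero [Nonempty σ] {F : MvPolynomial σ ℂ}
    (hF : F.IsHomogeneous 0) : ¬ IsSmoothHypersurface F := by
  intro hsm
  obtain ⟨c, rfl⟩ : ∃ c, F = C c :=
    ⟨_, totalDegree_eq_zero_iff_eq_C.mp ((totalDegree_zero_iff_isHomogeneous σ).mpr hF)⟩
  simpa using congr_fun (hsm 1 fun i => by simp) (Classical.arbitrary σ)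

lemma isSmoothHypersurface_rename_add_iff (p : MvPolynomial σ ℂ) (q : MvPolynomial τ ℂ) :
    IsSmoothHypersurface (rename Sum.inl p + rename Sum.inr q) ↔
      ∀ a b, (∀ i, eval a (pderiv i p) = 0) → (∀ j, eval b (pderiv j q) = 0) →
        a = 0 ∧ b = 0 := by
  constructor
  · intro hsm a b ha hb
    have hab := hsm (Sum.elim a b) <| by
      rintro (i | j)
      · rw [eval_sumElim_pderiv_inl_rename_add, ha]
      · rw [eval_sumElim_pderiv_inr_rename_add, hb]
    exact ⟨funext fun i => congr_fun hab (Sum.inl i), funext fun j => congr_fun hab (Sum.inr j)⟩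
  · intro h v hv
    obtain ⟨ha, hb⟩ := h (v ∘ Sum.inl) (v ∘ Sum.inr)
      (fun i => by
        rw [← eval_sumElim_pderiv_inl_rename_add p q _ (v ∘ Sum.inr), Sum.elim_comp_inl_inr, hv])
      (fun j => by
        rw [← eval_sumElim_pderiv_inr_rename_add p q (v ∘ Sum.inl), Sum.elim_comp_inl_inr, hv])
    rw [← Sum.elim_comp_inl_inr v, ha, hb, Sum.elim_zero_zero]

lemma IsSmoothHypersurface.rename_add_comm {p : MvPolynomial σ ℂ} {q : MvPolynomial τ ℂ}
    (hsm : IsSmoothHypersurface (rename Sum.inl p + rename Sum.inr q)) :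
    IsSmoothHypersurface (rename Sum.inl q + rename Sum.inr p) := by
  rw [isSmoothHypersurface_rename_add_iff] at hsm ⊢
  exact fun a b ha hb => (hsm b a hb ha).symm

lemma IsSmoothHypersurface.rename_add_X_pow {p : MvPolynomial σ ℂ} {q : MvPolynomial τ ℂ}
    {d : ℕ} (hq : q.IsHomogeneous d) (hd : d ≠ 0)
    (hsm : IsSmoothHypersurface (rename Sum.inl p + rename Sum.inr q)) :
    IsSmoothHypersurface (rename (Sum.inl : σ → σ ⊕ Unit) p + X (Sum.inr ()) ^ d) := by
  rcases eq_or_ne d 1 with rfl | hd₁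
  · intro v hv
    have hy := hv (Sum.inr ())
    rw [map_add, pderiv_rename_eq_zero_of_notMem_range (by simp), pow_one, pderiv_X_self] at hy
    simp at hy
  have hX : (X (Sum.inr ()) : MvPolynomial (σ ⊕ Unit) ℂ) ^ d = rename Sum.inr (X () ^ d) := by
    rw [map_pow, rename_X]
  rw [hX, isSmoothHypersurface_rename_add_iff]
  intro a b ha hb
  refine ⟨((isSmoothHypersurface_rename_add_iff p q).mp hsm a 0 ha ?_).1, ?_⟩
  · exact hq.eval_zero_pderiv hd₁
  · funext u
    exact eq_zero_of_eval_pderiv_X_pow hd (hb u)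

end IsSmoothHypersurface

/-- If `g₁ + g₂` (in disjoint variable sets, both homogeneous of degree `d`) defines a
smooth hypersurface, then so do `g₁ + y^d` and `g₂ + z^d`. -/
theorem smooth_sum_implies_smooth_pieces (m₁ m₂ d : ℕ)
    (g₁ : MvPolynomial (Fin (m₁ + 1)) ℂ) (g₂ : MvPolynomial (Fin m₂) ℂ)
    (hg₁ : g₁.IsHomogeneous d) (hg₂ : g₂.IsHomogeneous d)
    (hsm : IsSmoothHypersurface
      (rename (Sum.inl : Fin (m₁ + 1) → Fin (m₁ + 1) ⊕ Fin m₂) g₁ +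
       rename (Sum.inr : Fin m₂ → Fin (m₁ + 1) ⊕ Fin m₂) g₂)) :
    IsSmoothHypersurface
      (rename (Sum.inl : Fin (m₁ + 1) → Fin (m₁ + 1) ⊕ Unit) g₁ +
        X (Sum.inr ()) ^ d) ∧
    IsSmoothHypersurface
      (rename (Sum.inl : Fin m₂ → Fin m₂ ⊕ Unit) g₂ +
        X (Sum.inr ()) ^ d) := by
  have hd : d ≠ 0 := by
    rintro rfl
    exact not_isSmoothHypersurface_of_isHomogeneous_zero
      (hg₁.rename_isHomogeneous.add hg₂.rename_isHomogeneous) hsm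
  exact ⟨hsm.rename_add_X_pow hg₂ hd, hsm.rename_add_comm.rename_add_X_pow hg₁ hd⟩
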